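/- Let φ be a 3-CNF formula with m ≥ 2 clauses over n ≥ 4 variables, each clause containing exactly three literals on three pairwise distinct variables, and every variable occurring (in some polarity) in at least one clause. Then the graph G(φ) is 3-colorable (its vertex set partitions into the three independent sets I_0 = {v_x : x a variable} ∪ {c_j^a : 1 ≤ j ≤ m} ∪ {b, c}, I_1 = {v_x̄ : x a variable} ∪ {c_j^b : 1 ≤ j ≤ m} ∪ {d}, I_2 = {c_j : 1 ≤ j ≤ m} ∪ {a}), has domination number exactly 3 (with {a,b,c} a dominating set), has diameter exactly 3, and has radius exactly 2. -/

import Mathlib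

open SimpleGraph

/-- Vertices of the graph `G(φ)`: four special vertices `a, b, c, d`, a literal vertex
`lit x s` for each variable `x` and polarity `s` (`lit x true = v_x`,
`lit x false = v_x̄`), and for each clause `j` the triangle `cl j, cla j, clb j`. -/
inductive GV (n m : ℕ) where
  | a | b | c | d
  | lit : Fin n → Bool → GV n m
  | cl : Fin m → GV n m
  | cla : Fin m → GV n m
  | clb : Fin m → GV n m
deriving DecidableEq

/-- The graph `G(φ)` built from a 3-CNF formula `φ` whose `j`-th clause consists of the
three literals `Cl j 0, Cl j 1, Cl j 2` (a literal being a pair of a variable and a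
polarity). -/
def Gphi {n m : ℕ} (Cl : Fin m → Fin 3 → Fin n × Bool) : SimpleGraph (GV n m) :=
  SimpleGraph.fromRel (fun x y =>
    match x, y with
    | .a, .b => True
    | .a, .c => True
    | .a, .d => True
    | .b, .d => True
    | .c, .d => True
    | .lit x s, .lit x' s' => x = x' ∧ s ≠ s'
    | .a, .lit _ _ => True
    | .cl j, .cla j' => j = j'
    | .cl j, .clb j' => j = j'
    | .cla j, .clb j' => j = j'
    | .cl j, .lit x s => ∃ t, Cl j t = (x, s)
    | .c, .cl _ => True
    | .a, .cla _ => True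
    | .b, .clb _ => True
    | _, _ => False)

/-- The domination number: the least size of a set `D` of vertices such that every vertex
outside `D` has a neighbor in `D`. -/
noncomputable def domNum {V : Type*} (G : SimpleGraph V) : ℕ :=
  sInf {s | ∃ D : Finset V, D.card = s ∧ ∀ v ∉ D, ∃ u ∈ D, G.Adj u v}

/-- The radius: the minimum over vertices `u` of the maximum distance from `u`. -/
noncomputable def gRadius {V : Type*} (G : SimpleGraph V) : ℕ :=
  sInf {r | ∃ u : V, ∀ v : V, G.dist u v ≤ r}

/-!
The vertices `a`, `b`, `c` dominate `G(φ)` and each has eccentricity `2` (every vertex is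
adjacent to it or joined to it through one explicit midpoint), so the diameter is at most
`1 + 2`. For two distinct clauses `j₀ ≠ j₁`, every closed neighbourhood contains at most three
of the seven vertices `d, c_{j₀}, c_{j₁}, c_{j₀}^a, c_{j₁}^a, c_{j₀}^b, c_{j₁}^b`, so a
dominating set has at least three vertices; in particular no vertex is adjacent to all others,
and the radius is `2`. Finally `c_{j₀}^a` and `c_{j₁}^b` are non-adjacent and have no common
neighbour, so the diameter is `3`.
-/

open Finset

namespace SimpleGraph

variable {V : Type*} {G : SimpleGraph V}

variable (G) in
def IsDominating (D : Finset V) : Prop :=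
  ∀ v ∉ D, ∃ u ∈ D, G.Adj u v

lemma IsDominating.card_le_mul_card [DecidableEq V] [DecidableRel G.Adj] {D W : Finset V}
    {k : ℕ} (hD : G.IsDominating D) (hW : ∀ u, #{w ∈ W | w = u ∨ G.Adj u w} ≤ k) : #W ≤ k * #D := by
  have hcover : W ⊆ D.biUnion fun u => {w ∈ W | w = u ∨ G.Adj u w} := by
    intro w hw
    by_cases hwD : w ∈ D
    · exact mem_biUnion.2 ⟨w, hwD, mem_filter.2 ⟨hw, Or.inl rfl⟩⟩
    · obtain ⟨u, hu, huw⟩ := hD w hwD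
      exact mem_biUnion.2 ⟨u, hu, mem_filter.2 ⟨hw, Or.inr huw⟩⟩
  calc #W ≤ #(D.biUnion fun u => {w ∈ W | w = u ∨ G.Adj u w}) := card_le_card hcover
    _ ≤ ∑ u ∈ D, #{w ∈ W | w = u ∨ G.Adj u w} := card_biUnion_le
    _ ≤ ∑ _u ∈ D, k := sum_le_sum fun u _ => hW u
    _ = k * #D := by rw [sum_const, smul_eq_mul, mul_comm]

lemma IsDominating.ediam_le {D : Finset V} {r : ℕ∞} (hD : G.IsDominating D)
    (hr : ∀ u ∈ D, G.eccent u ≤ r) : G.ediam ≤ 1 + r := by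
  refine ediam_le_of_edist_le fun u v => ?_
  by_cases hu : u ∈ D
  · exact (edist_le_eccent.trans (hr u hu)).trans le_add_self
  · obtain ⟨w, hw, hwu⟩ := hD u hu
    calc G.edist u v ≤ G.edist u w + G.edist w v := G.edist_triangle
      _ ≤ 1 + r :=
        add_le_add (edist_eq_one_iff_adj.2 hwu.symm).le (edist_le_eccent.trans (hr w hw))

lemma eccent_le_two_of_forall_exists {u : V}
    (h : ∀ v, ∃ w, (G.Adj u w ∨ u = w) ∧ (G.Adj w v ∨ w = v)) : G.eccent u ≤ 2 := by
  refine (eccent_le_iff u 2).2 fun v => ?_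
  obtain ⟨w, huw, hwv⟩ := h v
  calc G.edist u v ≤ G.edist u w + G.edist w v := G.edist_triangle
    _ ≤ 1 + 1 := add_le_add (edist_le_one_iff_adj_or_eq.2 huw) (edist_le_one_iff_adj_or_eq.2 hwv)

lemma Coloring.mem_colorClass_trichotomy (C : G.Coloring (Fin 3)) (w : V) :
    (w ∈ C.colorClass 0 ∧ w ∉ C.colorClass 1 ∧ w ∉ C.colorClass 2) ∨
      (w ∉ C.colorClass 0 ∧ w ∈ C.colorClass 1 ∧ w ∉ C.colorClass 2) ∨
      (w ∉ C.colorClass 0 ∧ w ∉ C.colorClass 1 ∧ w ∈ C.colorClass 2) := by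
  simp only [Coloring.colorClass, Set.mem_ofPred_eq]
  generalize C w = i
  revert i
  decide

lemma domNum_eq_of_isDominating {D : Finset V} {k : ℕ} (hD : G.IsDominating D)
    (hcard : #D = k) (hle : ∀ D' : Finset V, G.IsDominating D' → k ≤ #D') : domNum G = k :=
  le_antisymm (Nat.sInf_le ⟨D, hcard, hD⟩)
    (le_csInf ⟨k, D, hcard, hD⟩ fun _ ⟨D', hcard', hD'⟩ => hcard' ▸ hle D' hD')

lemma gRadius_eq_of_dist_le {u : V} {k : ℕ} (hu : ∀ v, G.dist u v ≤ k)
    (hle : ∀ u', ∃ v, k ≤ G.dist u' v) : gRadius G = k :=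
  le_antisymm (Nat.sInf_le ⟨u, hu⟩)
    (le_csInf ⟨k, u, hu⟩ fun _ ⟨u', hu'⟩ => (hle u').elim fun v hv => hv.trans (hu' v))

end SimpleGraph

namespace Gphi

variable {n m : ℕ} {Cl : Fin m → Fin 3 → Fin n × Bool}

instance : Nonempty (GV n m) := ⟨.a⟩

def color : GV n m → Fin 3
  | .a => 2 | .b => 0 | .c => 0 | .d => 1
  | .lit _ true => 0 | .lit _ false => 1
  | .cl _ => 2 | .cla _ => 0 | .clb _ => 1

variable (Cl) in
def coloring : (Gphi Cl).Coloring (Fin 3) :=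
  Coloring.mk color fun {u v} ⟨_, h⟩ => by
    rcases h with h | h <;>
      rcases u with _|_|_|_|⟨_, _|_⟩|_|_|_ <;> rcases v with _|_|_|_|⟨_, _|_⟩|_|_|_ <;>
      simp_all [color]

@[simp]
lemma coloring_apply (w : GV n m) : coloring Cl w = color w :=
  rfl

lemma isDominating_abc : (Gphi Cl).IsDominating {.a, .b, .c}
  | .a, h | .b, h | .c, h => by simp at h
  | .d, _ | .lit _ _, _ | .cla _, _ => ⟨.a, by simp, by simp [Gphi]⟩
  | .cl _, _ => ⟨.c, by simp, by simp [Gphi]⟩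
  | .clb _, _ => ⟨.b, by simp, by simp [Gphi]⟩

lemma eccent_a_le_two : (Gphi Cl).eccent .a ≤ 2 :=
  eccent_le_two_of_forall_exists fun
    | .a | .b | .c | .d | .lit _ _ | .cla _ => ⟨.a, by simp [Gphi]⟩
    | .cl j => ⟨.cla j, by simp [Gphi]⟩
    | .clb _ => ⟨.b, by simp [Gphi]⟩

lemma eccent_b_le_two : (Gphi Cl).eccent .b ≤ 2 :=
  eccent_le_two_of_forall_exists fun
    | .a | .b | .d | .clb _ => ⟨.b, by simp [Gphi]⟩
    | .c | .lit _ _ | .cla _ => ⟨.a, by simp [Gphi]⟩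
    | .cl j => ⟨.clb j, by simp [Gphi]⟩

lemma eccent_c_le_two : (Gphi Cl).eccent .c ≤ 2 :=
  eccent_le_two_of_forall_exists fun
    | .a | .c | .d | .cl _ => ⟨.c, by simp [Gphi]⟩
    | .b | .lit _ _ | .cla _ => ⟨.a, by simp [Gphi]⟩
    | .clb j => ⟨.cl j, by simp [Gphi]⟩

def witnessSet (j₀ j₁ : Fin m) : Finset (GV n m) :=
  {.d, .cl j₀, .cl j₁, .cla j₀, .cla j₁, .clb j₀, .clb j₁}

lemma card_witnessSet {j₀ j₁ : Fin m} (hj : j₀ ≠ j₁) : #(witnessSet (n := n) j₀ j₁) = 7 := by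
  simp [witnessSet, hj]

open Classical in
lemma card_closedNbhd_inter_witnessSet_le (j₀ j₁ : Fin m) (u : GV n m) :
    #{w ∈ witnessSet j₀ j₁ | w = u ∨ (Gphi Cl).Adj u w} ≤ 3 := by
  obtain ⟨S, hS, hsub⟩ : ∃ S : Finset (GV n m), #S ≤ 3 ∧
      ∀ w ∈ witnessSet j₀ j₁, w = u ∨ (Gphi Cl).Adj u w → w ∈ S :=
    match u with
    | .a => ⟨{.d, .cla j₀, .cla j₁}, card_le_three, by simp [witnessSet, Gphi]⟩
    | .b => ⟨{.d, .clb j₀, .clb j₁}, card_le_three, by simp [witnessSet, Gphi]⟩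
    | .c => ⟨{.d, .cl j₀, .cl j₁}, card_le_three, by simp [witnessSet, Gphi]⟩
    | .d => ⟨{.d}, by simp, by simp [witnessSet, Gphi]⟩
    | .lit _ _ => ⟨{.cl j₀, .cl j₁}, card_le_two.trans (by norm_num), by simp [witnessSet, Gphi]⟩
    | .cl j | .cla j | .clb j =>
      ⟨{.cl j, .cla j, .clb j}, card_le_three, by simp [witnessSet, Gphi, eq_comm]⟩
  exact (card_le_card fun w hw => hsub w (mem_filter.1 hw).1 (mem_filter.1 hw).2).trans hS

variable {j₀ j₁ : Fin m}

lemma three_le_card_of_isDominating (hj : j₀ ≠ j₁) {D : Finset (GV n m)}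
    (hD : (Gphi Cl).IsDominating D) : 3 ≤ #D := by
  classical
  have := hD.card_le_mul_card (card_closedNbhd_inter_witnessSet_le (Cl := Cl) j₀ j₁)
  rw [card_witnessSet hj] at this
  omega

lemma exists_ne_not_adj (hj : j₀ ≠ j₁) (u : GV n m) : ∃ v, u ≠ v ∧ ¬ (Gphi Cl).Adj u v := by
  by_contra! h
  have := three_le_card_of_isDominating hj (D := {u}) (Cl := Cl) fun v hv =>
    ⟨u, mem_singleton_self u, h v (Ne.symm (notMem_singleton.1 hv))⟩
  simp at this

lemma three_le_edist_cla_clb (hj : j₀ ≠ j₁) : 3 ≤ (Gphi Cl).edist (.cla j₀) (.clb j₁) := by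
  have hcommon : (Gphi Cl).commonNeighbors (.cla j₀) (.clb j₁) = ∅ := by
    ext w
    rcases w with _|_|_|_|_|_|_|_ <;> simp [mem_commonNeighbors, Gphi]
    rintro rfl
    exact hj
  exact Order.add_one_le_of_lt (two_lt_edist_iff.2 ⟨by simp, by simp [Gphi, hj], hcommon⟩)

lemma ediam_eq_three (hj : j₀ ≠ j₁) : (Gphi Cl).ediam = 3 := by
  refine le_antisymm ?_ ((three_le_edist_cla_clb hj).trans edist_le_ediam)
  refine (isDominating_abc.ediam_le (r := 2) ?_).trans (by norm_num)
  simp only [mem_insert, mem_singleton]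
  rintro u (rfl | rfl | rfl)
  exacts [eccent_a_le_two, eccent_b_le_two, eccent_c_le_two]

lemma gRadius_eq_two (hj : j₀ ≠ j₁) : gRadius (Gphi Cl) = 2 := by
  have hconn : (Gphi Cl).Connected := connected_of_ediam_ne_top (by simp [ediam_eq_three hj])
  refine gRadius_eq_of_dist_le (u := .a) (fun v => ?_) fun u => ?_
  · exact ENat.toNat_le_toNat (edist_le_eccent.trans eccent_a_le_two) (by simp)
  · obtain ⟨v, hne, hnadj⟩ := exists_ne_not_adj hj u
    exact ⟨v, hconn.one_lt_dist_of_ne_of_not_adj hne hnadj⟩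

end Gphi

open Gphi in
theorem stmt11_general {n m : ℕ} (hm : 2 ≤ m)
    (Cl : Fin m → Fin 3 → Fin n × Bool) :
    (Gphi Cl).Colorable 3 ∧
    (let I0 : Set (GV n m) :=
       {w | (∃ x, w = GV.lit x true) ∨ (∃ j, w = GV.cla j) ∨ w = GV.b ∨ w = GV.c}
     let I1 : Set (GV n m) :=
       {w | (∃ x, w = GV.lit x false) ∨ (∃ j, w = GV.clb j) ∨ w = GV.d}
     let I2 : Set (GV n m) := {w | (∃ j, w = GV.cl j) ∨ w = GV.a}
     (∀ w, (w ∈ I0 ∧ w ∉ I1 ∧ w ∉ I2) ∨ (w ∉ I0 ∧ w ∈ I1 ∧ w ∉ I2) ∨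
           (w ∉ I0 ∧ w ∉ I1 ∧ w ∈ I2)) ∧
     (∀ u ∈ I0, ∀ v ∈ I0, ¬ (Gphi Cl).Adj u v) ∧
     (∀ u ∈ I1, ∀ v ∈ I1, ¬ (Gphi Cl).Adj u v) ∧
     (∀ u ∈ I2, ∀ v ∈ I2, ¬ (Gphi Cl).Adj u v)) ∧
    domNum (Gphi Cl) = 3 ∧
    (∀ v : GV n m, v ∉ ({GV.a, GV.b, GV.c} : Finset (GV n m)) →
        ∃ u ∈ ({GV.a, GV.b, GV.c} : Finset (GV n m)), (Gphi Cl).Adj u v) ∧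
    (Gphi Cl).diam = 3 ∧
    gRadius (Gphi Cl) = 2 := by
  obtain ⟨j₀, j₁, hj⟩ : ∃ j₀ j₁ : Fin m, j₀ ≠ j₁ := ⟨⟨0, by omega⟩, ⟨1, hm⟩, by simp⟩
  refine ⟨⟨coloring Cl⟩, ?_, domNum_eq_of_isDominating isDominating_abc (by simp)
    (fun D hD => three_le_card_of_isDominating hj hD), isDominating_abc, ?_, gRadius_eq_two hj⟩
  · intro I0 I1 I2
    obtain ⟨h0, h1, h2⟩ : I0 = (coloring Cl).colorClass 0 ∧ I1 = (coloring Cl).colorClass 1 ∧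
        I2 = (coloring Cl).colorClass 2 := by
      refine ⟨?_, ?_, ?_⟩ <;> ext (_|_|_|_|⟨x, _|_⟩|j|j|j) <;>
        simp [I0, I1, I2, color, Coloring.colorClass]
    rw [h0, h1, h2]
    exact ⟨(coloring Cl).mem_colorClass_trichotomy,
      fun _ hu _ hv => (coloring Cl).not_adj_of_mem_colorClass hu hv,
      fun _ hu _ hv => (coloring Cl).not_adj_of_mem_colorClass hu hv,
      fun _ hu _ hv => (coloring Cl).not_adj_of_mem_colorClass hu hv⟩
  · rw [diam, ediam_eq_three hj]
    rfl

/-- For a 3-CNF formula `φ` with `m ≥ 2` clauses over `n ≥ 4` variables, each clause on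
three pairwise distinct variables and every variable occurring in some clause: `G(φ)` is
`3`-colorable (its vertices partition into the three independent sets
`I₀ = {v_x} ∪ {c_j^a} ∪ {b,c}`, `I₁ = {v_x̄} ∪ {c_j^b} ∪ {d}`, `I₂ = {c_j} ∪ {a}`),
has domination number exactly `3` (with `{a,b,c}` dominating), diameter exactly `3`
and radius exactly `2`. -/
theorem stmt11 {n m : ℕ} (hm : 2 ≤ m) (hn : 4 ≤ n)
    (Cl : Fin m → Fin 3 → Fin n × Bool)
    (hdistinct : ∀ j, ∀ t t' : Fin 3, t ≠ t' → (Cl j t).1 ≠ (Cl j t').1)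
    (hoccur : ∀ x : Fin n, ∃ j t, (Cl j t).1 = x) :
    (Gphi Cl).Colorable 3 ∧
    (let I0 : Set (GV n m) :=
       {w | (∃ x, w = GV.lit x true) ∨ (∃ j, w = GV.cla j) ∨ w = GV.b ∨ w = GV.c}
     let I1 : Set (GV n m) :=
       {w | (∃ x, w = GV.lit x false) ∨ (∃ j, w = GV.clb j) ∨ w = GV.d}
     let I2 : Set (GV n m) := {w | (∃ j, w = GV.cl j) ∨ w = GV.a}
     (∀ w, (w ∈ I0 ∧ w ∉ I1 ∧ w ∉ I2) ∨ (w ∉ I0 ∧ w ∈ I1 ∧ w ∉ I2) ∨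
           (w ∉ I0 ∧ w ∉ I1 ∧ w ∈ I2)) ∧
     (∀ u ∈ I0, ∀ v ∈ I0, ¬ (Gphi Cl).Adj u v) ∧
     (∀ u ∈ I1, ∀ v ∈ I1, ¬ (Gphi Cl).Adj u v) ∧
     (∀ u ∈ I2, ∀ v ∈ I2, ¬ (Gphi Cl).Adj u v)) ∧
    domNum (Gphi Cl) = 3 ∧
    (∀ v : GV n m, v ∉ ({GV.a, GV.b, GV.c} : Finset (GV n m)) →
        ∃ u ∈ ({GV.a, GV.b, GV.c} : Finset (GV n m)), (Gphi Cl).Adj u v) ∧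
    (Gphi Cl).diam = 3 ∧
    gRadius (Gphi Cl) = 2 :=
  stmt11_general hm Cl
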